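/- arXiv:1010.1751 — 4 statements merged into one kernel-verified Lean document; each statement's English description precedes it below -/
import Mathlib

section
/- Let u = e₁ be the first standard basis vector of ℝ⁶ and v = δ₁e₆. Then u ≥ 0, v ≥ 0, v = θ + Ru and u·v = 0. Consequently, the pair (y,z) defined by y(t) = t·u and z(t) = t·v is a fluid path associated with (θ,R), i.e., z(t) = z(0) + θt + Ry(t) for all t ≥ 0, y is continuous and nondecreasing with y(0) = 0, each coordinate y_k increases only at times t at which z_k(t) = 0, and z(t) ∈ ℝ₊⁶ for all t ≥ 0; moreover this fluid path is divergent, i.e., |z(t)| = Σᵢ|zᵢ(t)| → ∞ as t → ∞. -/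
open MeasureTheory ProbabilityTheory
open scoped ENNReal NNReal

noncomputable section

/-- The conditions imposed on the constants `δ₁, δ₂, δ₃, δ₄`. -/
def DeltaCond (δ₁ δ₂ δ₃ δ₄ : ℝ) : Prop :=
  0 < δ₁ ∧ 0 < δ₂ ∧ 0 < δ₃ ∧ 0 < δ₄ ∧
    δ₂ + δ₃ ≤ δ₄ / 6 ∧ δ₁ ≤ δ₃ ∧ δ₃ ≤ 1 / 10 ∧ δ₄ < 1

/-- The reflection matrix `R = J₁ + J₂` of the paper. -/
def Rmat (δ₁ δ₂ δ₃ δ₄ : ℝ) : Matrix (Fin 6) (Fin 6) ℝ :=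
  !![1, 1 + δ₂, 1 + δ₂, 1 + δ₂, 1 + δ₂, 1 - δ₄;
     1, 1, 1 - δ₃, 1 - δ₃, 1 - δ₃, 1 - δ₃;
     1, 1 - δ₃, 1, 1 - δ₃, 1 - δ₃, 1 - δ₃;
     1, 1 - δ₃, 1 - δ₃, 1, 1 - δ₃, 1 - δ₃;
     1, 1 - δ₃, 1 - δ₃, 1 - δ₃, 1, 1 - δ₃;
     1 + δ₁, 1 - δ₃, 1 - δ₃, 1 - δ₃, 1 - δ₃, 1]

/-- A standard one-dimensional Brownian motion started at `0`: continuous paths,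
measurable marginals, independent increments, and Gaussian increments with
variance equal to the elapsed time. -/
def IsStdBM {Ω : Type} [MeasurableSpace Ω] (P : Measure Ω) (B : ℝ → Ω → ℝ) : Prop :=
  (∀ t, Measurable fun ω => B t ω) ∧
  (∀ ω, Continuous fun t => B t ω) ∧
  (∀ ω, B 0 ω = 0) ∧
  (∀ (n : ℕ) (t : ℕ → ℝ), Monotone t → (∀ i, 0 ≤ t i) →
      iIndepFun
        (fun i : Fin n => fun ω => B (t (i.1 + 1)) ω - B (t i.1) ω) P) ∧
  (∀ s t : ℝ, 0 ≤ s → s ≤ t →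
      P.map (fun ω => B t ω - B s ω) = gaussianReal 0 (Real.toNNReal (t - s)))

/-- An SRBM solution `(Z, Y, B)` with data `(θ, I, R)`, where `θ = (-1,…,-1)` and
`R = Rmat δ₁ δ₂ δ₃ δ₄`:  `B` consists of six independent standard Brownian motions,
`Z` and `Y` are continuous adapted processes satisfying, almost surely, the SRBM
equation, the monotonicity and reflection conditions on `Y`, and nonnegativity of
`Z`. -/
def IsSRBM (δ₁ δ₂ δ₃ δ₄ : ℝ) {Ω : Type} [MeasurableSpace Ω] (P : Measure Ω)
    (B Z Y : Fin 6 → ℝ → Ω → ℝ) : Prop :=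
  (∀ k, IsStdBM P (B k)) ∧
  iIndepFun (fun (k : Fin 6) ω => fun t : ℝ => B k t ω) P ∧
  (∀ k t, Measurable fun ω => Z k t ω) ∧
  (∀ k t, Measurable fun ω => Y k t ω) ∧
  (∀ k ω, Continuous fun t => Z k t ω) ∧
  (∀ k ω, Continuous fun t => Y k t ω) ∧
  (∀ᵐ ω ∂P,
    (∀ t, 0 ≤ t → ∀ k, Z k t ω =
        Z k 0 ω + B k t ω + (-1) * t + ∑ j, Rmat δ₁ δ₂ δ₃ δ₄ k j * Y j t ω) ∧
    (∀ k, Y k 0 ω = 0) ∧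
    (∀ k, MonotoneOn (fun t => Y k t ω) (Set.Ici (0 : ℝ))) ∧
    (∀ k t₁ t₂, 0 ≤ t₁ → t₁ < t₂ → Y k t₁ ω < Y k t₂ ω →
        ∃ s, t₁ ≤ s ∧ s ≤ t₂ ∧ Z k s ω = 0) ∧
    (∀ k t, 0 ≤ t → 0 ≤ Z k t ω))

/-- Running maximum `max_{0 ≤ s ≤ t} f(s)`. -/
def runMax (f : ℝ → ℝ) (t : ℝ) : ℝ := sSup (f '' Set.Icc 0 t)

/-- The hitting time `inf {t ≥ 0 : pred t}`, with `inf ∅ = ∞`. -/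
def hitTime (pred : ℝ → Prop) : ℝ≥0∞ :=
  sInf {s : ℝ≥0∞ | ∃ t : ℝ, 0 ≤ t ∧ pred t ∧ s = ENNReal.ofReal t}

section LinearFluidPath

variable {n : ℕ} {θ u v : Fin n → ℝ} {R : Matrix (Fin n) (Fin n) ℝ}

theorem linear_path_eq (hv : ∀ i, v i = θ i + ∑ j, R i j * u j) (t : ℝ) (i : Fin n) :
    t * v i = 0 * v i + θ i * t + ∑ j, R i j * (t * u j) := by
  simp only [hv, mul_left_comm _ t, ← Finset.mul_sum]
  ring

theorem exists_zero_of_linear_path_increase (hu : ∀ i, 0 ≤ u i) (hv : ∀ i, 0 ≤ v i)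
    (huv : ∑ i, u i * v i = 0) (i : Fin n) {t₁ t₂ : ℝ} (h12 : t₁ < t₂)
    (hinc : t₁ * u i < t₂ * u i) : ∃ s, t₁ ≤ s ∧ s ≤ t₂ ∧ s * v i = 0 := by
  have hui : 0 < u i := lt_of_not_ge fun h => (mul_le_mul_of_nonpos_right h12.le h).not_gt hinc
  have huvi : u i * v i = 0 :=
    (Finset.sum_eq_zero_iff_of_nonneg fun j _ => mul_nonneg (hu j) (hv j)).1 huv i
      (Finset.mem_univ i)
  refine ⟨t₁, le_rfl, h12.le, ?_⟩
  rw [(mul_eq_zero.1 huvi).resolve_left hui.ne', mul_zero]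

theorem tendsto_sum_abs_linear_path_atTop (hv : ∀ i, 0 ≤ v i) {k : Fin n} (hk : 0 < v k) :
    Filter.Tendsto (fun t => ∑ i, |t * v i|) Filter.atTop Filter.atTop := by
  have hsum : 0 < ∑ i, v i := Finset.sum_pos' (fun i _ => hv i) ⟨k, Finset.mem_univ k, hk⟩
  refine (Filter.tendsto_id.atTop_mul_const hsum).congr' ?_
  filter_upwards [Filter.eventually_ge_atTop 0] with t ht
  simp only [id, Finset.mul_sum, abs_mul, abs_of_nonneg ht, abs_of_nonneg (hv _)]

end LinearFluidPath

theorem Rmat_apply_zero (δ₁ δ₂ δ₃ δ₄ : ℝ) (i : Fin 6) :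
    Rmat δ₁ δ₂ δ₃ δ₄ i 0 = if i = 5 then 1 + δ₁ else 1 := by
  fin_cases i <;> rfl

/-- The pair `(u,v) = (e₁, δ₁ e₆)` solves the linear complementarity problem, the
corresponding linear pair `(y,z)` is a fluid path associated with `(θ, R)`, and this
fluid path is divergent. -/
theorem stmt_0 (δ₁ δ₂ δ₃ δ₄ : ℝ) (hδ : DeltaCond δ₁ δ₂ δ₃ δ₄)
    (θ u v : Fin 6 → ℝ) (y z : ℝ → Fin 6 → ℝ)
    (hθ : θ = fun _ => -1)
    (hu : u = fun i => if i = 0 then 1 else 0)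
    (hv : v = fun i => if i = 5 then δ₁ else 0)
    (hy : y = fun t i => t * u i)
    (hz : z = fun t i => t * v i) :
    (∀ i, 0 ≤ u i) ∧ (∀ i, 0 ≤ v i) ∧
    (∀ i, v i = θ i + ∑ j, Rmat δ₁ δ₂ δ₃ δ₄ i j * u j) ∧
    (∑ i, u i * v i) = 0 ∧
    (∀ t : ℝ, 0 ≤ t → ∀ i, z t i = z 0 i + θ i * t + ∑ j, Rmat δ₁ δ₂ δ₃ δ₄ i j * y t j) ∧
    (∀ i, Continuous fun t => y t i) ∧
    (∀ i, MonotoneOn (fun t => y t i) (Set.Ici (0 : ℝ))) ∧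
    (∀ i, y 0 i = 0) ∧
    (∀ i (t₁ t₂ : ℝ), 0 ≤ t₁ → t₁ < t₂ → y t₁ i < y t₂ i →
        ∃ s, t₁ ≤ s ∧ s ≤ t₂ ∧ z s i = 0) ∧
    (∀ t : ℝ, 0 ≤ t → ∀ i, 0 ≤ z t i) ∧
    Filter.Tendsto (fun t => ∑ i, |z t i|) Filter.atTop Filter.atTop := by
  have hδ₁ : 0 < δ₁ := hδ.1
  subst hθ hu hv hy hz
  have hu : ∀ i : Fin 6, 0 ≤ if i = 0 then (1 : ℝ) else 0 := fun i => by split <;> norm_num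
  have hv : ∀ i : Fin 6, 0 ≤ if i = 5 then δ₁ else 0 := fun i => by split <;> simp [hδ₁.le]
  have hlcp : ∀ i : Fin 6, (if i = 5 then δ₁ else 0) =
      -1 + ∑ j, Rmat δ₁ δ₂ δ₃ δ₄ i j * if j = 0 then 1 else 0 := fun i => by
    simp only [mul_ite, mul_one, mul_zero, Finset.sum_ite_eq', Finset.mem_univ, if_true,
      Rmat_apply_zero]
    split <;> ring
  have hcompl : ∑ i : Fin 6, (if i = 0 then (1 : ℝ) else 0) * (if i = 5 then δ₁ else 0) = 0 := by
    simp
  refine ⟨hu, hv, hlcp, hcompl, fun t _ i => linear_path_eq hlcp t i,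
    fun i => continuous_id.mul continuous_const,
    fun i _ _ _ _ h => mul_le_mul_of_nonneg_right h (hu i), fun i => zero_mul _,
    fun i _ _ _ h12 hinc => exists_zero_of_linear_path_increase hu hv hcompl i h12 hinc,
    fun t ht i => mul_nonneg ht (hv i), tendsto_sum_abs_linear_path_atTop hv (k := 5) ?_⟩
  simpa using hδ₁
end
end

section
/- Let B be a standard one-dimensional Brownian motion with B(0) = 0. For each ε > 0 there exist constants C₁ > 0 and ε' > 0 such that: (i) for every u ≥ 0, P(inf_{t≥0} (εt + u − |B(t)|) ≤ 0) ≤ C₁e^{−ε'u}; and (ii) for every u > 0 and every t ≥ 0, P(min_{0≤s≤s'≤t} (ε(s'−s) + u − |B(s') − B(s)|) ≤ 0) ≤ C₁(t+1)e^{−ε'u}. -/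
open MeasureTheory ProbabilityTheory
open scoped ENNReal NNReal

noncomputable section

/-!
Chaining over the dyadic points of a unit interval gives
`P(sup_{s ∈ [a, a+1]} |B s - B a| > x) ≤ exp (16 - x² / 32)`. Cut `{s ≤ s'}` into blocks
`s ∈ [j, j+1]`, `s' ∈ [j+d, j+d+1]`, on which `s' - s ≥ d - 1`: crossing the barrier
`ε (s' - s) + u` there forces an oscillation of size `w / 3` on `[j, j+1]` or `[j+d, j+d+1]`,
or `|B (j+d) - B j| > w / 3`, where `w = ε (d - 1)⁺ + u`. All three have probability
`O(exp (-c (d + u)))`, so the series over `d` is geometric; part (i) is the row `j = 0`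
(as `B 0 = 0`) and part (ii) uses the `⌊t⌋ + 1` rows `j ≤ t`. An infimum `≤ 0` is turned into a
strict crossing of the barrier with `u / 2` in place of `u`.
-/

open Real Finset

lemma hasSubgaussianMGF_of_map_eq_gaussianReal {Ω : Type*} [MeasurableSpace Ω] {P : Measure Ω}
    {X : Ω → ℝ} {v : ℝ≥0} (hX : P.map X = gaussianReal 0 v) : HasSubgaussianMGF X v P where
  integrable_exp_mul t := Integrable.of_integral_ne_zero <| by
    rw [← mgf, mgf_gaussianReal hX]; positivity
  mgf_le t := by simp [mgf_gaussianReal hX]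

lemma ProbabilityTheory.HasSubgaussianMGF.measure_lt_abs_le {Ω : Type*} [MeasurableSpace Ω]
    {P : Measure Ω} [IsFiniteMeasure P] {X : Ω → ℝ} {c : ℝ≥0} (hX : HasSubgaussianMGF X c P)
    {y : ℝ} (hy : 0 ≤ y) : P {ω | y < |X ω|} ≤ ENNReal.ofReal (2 * exp (-y ^ 2 / (2 * c))) := by
  have hsub : {ω | y < |X ω|} ⊆ {ω | y ≤ X ω} ∪ {ω | y ≤ (-X) ω} := fun ω (hω : y < |X ω|) ↦ by
    rcases le_abs'.mp hω.le with h | h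
    · exact Or.inr (show y ≤ -X ω by linarith)
    · exact Or.inl h
  calc P {ω | y < |X ω|} ≤ P {ω | y ≤ X ω} + P {ω | y ≤ (-X) ω} :=
        (measure_mono hsub).trans (measure_union_le _ _)
    _ ≤ ENNReal.ofReal (exp (-y ^ 2 / (2 * c))) + ENNReal.ofReal (exp (-y ^ 2 / (2 * c))) := by
        rw [← ofReal_measureReal, ← ofReal_measureReal]
        gcongr
        exacts [hX.measure_ge_le hy, hX.neg.measure_ge_le hy]
    _ = ENNReal.ofReal (2 * exp (-y ^ 2 / (2 * c))) := by
        rw [← ENNReal.ofReal_add (by positivity) (by positivity), ← two_mul]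

lemma abs_apply_dyadic_le_sum {g : ℝ → ℝ} (hg0 : g 0 = 0) {a : ℕ → ℝ}
    (h : ∀ n j : ℕ, j < 2 ^ n → |g ((j + 1) / 2 ^ n) - g (j / 2 ^ n)| ≤ a n) :
    ∀ n j : ℕ, j ≤ 2 ^ n → |g (j / 2 ^ n)| ≤ ∑ k ∈ range (n + 1), a k := by
  have ha : ∀ n, 0 ≤ a n := fun n ↦ (abs_nonneg _).trans (h n 0 (by positivity))
  intro n
  induction n with
  | zero =>
    intro j hj
    interval_cases j
    · simpa [hg0] using ha 0
    · simpa [hg0] using h 0 0 one_pos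
  | succ n ih =>
    intro j hj
    rw [sum_range_succ]
    obtain ⟨m, rfl | rfl⟩ := Nat.even_or_odd' j
    · have hm : ((2 * m : ℕ) : ℝ) / 2 ^ (n + 1) = m / 2 ^ n := by push_cast; ring
      rw [hm]
      linarith [ih m (by omega), ha (n + 1)]
    · have hm : ((2 * m + 1 : ℕ) : ℝ) / 2 ^ (n + 1) = ((2 * m : ℕ) + 1) / 2 ^ (n + 1) := by
        push_cast; ring
      have hm' : ((2 * m : ℕ) : ℝ) / 2 ^ (n + 1) = m / 2 ^ n := by push_cast; ring
      have hinc := h (n + 1) (2 * m) (by omega)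
      rw [hm', ← hm] at hinc
      linarith [ih m (by omega), abs_sub_abs_le_abs_sub (g ((2 * m + 1 : ℕ) / 2 ^ (n + 1)))
        (g (m / 2 ^ n))]

lemma abs_le_of_dyadic_increments_le {g : ℝ → ℝ} (hg : Continuous g) (hg0 : g 0 = 0)
    {a : ℕ → ℝ} {M : ℝ} (hM : ∀ n, ∑ k ∈ range n, a k ≤ M)
    (h : ∀ n j : ℕ, j < 2 ^ n → |g ((j + 1) / 2 ^ n) - g (j / 2 ^ n)| ≤ a n)
    {t : ℝ} (ht : t ∈ Set.Icc 0 1) : |g t| ≤ M := by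
  have hpow : Filter.Tendsto (fun n : ℕ ↦ (2 : ℝ) ^ n) Filter.atTop Filter.atTop :=
    tendsto_pow_atTop_atTop_of_one_lt one_lt_two
  have hlim := ((hg.tendsto t).comp ((tendsto_nat_floor_mul_div_atTop ht.1).comp hpow)).abs
  refine le_of_tendsto hlim (Filter.Eventually.of_forall fun n ↦ ?_)
  have hj : ⌊t * 2 ^ n⌋₊ ≤ 2 ^ n :=
    Nat.floor_le_of_le (by simpa using mul_le_of_le_one_left (pow_nonneg zero_le_two n) ht.2)
  exact (abs_apply_dyadic_le_sum hg0 h n _ hj).trans (hM _)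

-- The thresholds `x / 4 * (3 / 4) ^ n` sum to `x`, yet decay slower than the `2 ^ (-n / 2)`
-- standard deviation of a level-`n` dyadic increment of Brownian motion.
lemma exists_lt_abs_dyadic_increment {f : ℝ → ℝ} (hf : Continuous f) {a s x : ℝ} (hx : 0 ≤ x)
    (hs : s ∈ Set.Icc a (a + 1)) (hxs : x < |f s - f a|) :
    ∃ n j : ℕ, j < 2 ^ n ∧
      x / 4 * (3 / 4) ^ n < |f (a + (j + 1) / 2 ^ n) - f (a + j / 2 ^ n)| := by
  by_contra! h
  have hM (n : ℕ) : ∑ k ∈ range n, x / 4 * (3 / 4 : ℝ) ^ k ≤ x := by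
    have := geom_sum_Ico_le_of_lt_one (x := (3 / 4 : ℝ)) (m := 0) (n := n) (by norm_num)
      (by norm_num)
    rw [← range_eq_Ico] at this
    rw [← mul_sum]
    nlinarith
  have := abs_le_of_dyadic_increments_le (g := fun r ↦ f (a + r) - f a)
    ((hf.comp (continuous_const_add a)).sub continuous_const) (by simp) hM
    (fun n j hj ↦ by simpa using h n j hj) (t := s - a) ⟨by linarith [hs.1], by linarith [hs.2]⟩
  simp only [add_sub_cancel] at this
  linarith

lemma two_pow_mul_exp_neg_le {z : ℝ} (hz : 16 ≤ z) (n : ℕ) :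
    2 ^ n * exp (-z * (9 / 8) ^ n) ≤ exp (-z) * (1 / 2) ^ n := by
  have hpow : 1 + n * (1 / 8 : ℝ) ≤ (9 / 8) ^ n := by
    have := one_add_mul_le_pow (a := (1 / 8 : ℝ)) (by norm_num) n
    norm_num at this ⊢
    linarith
  have h4 : (4 : ℝ) ^ n ≤ exp (z * ((9 / 8) ^ n - 1)) := calc
    (4 : ℝ) ^ n ≤ exp 2 ^ n := by
      gcongr
      rw [show (2 : ℝ) = 1 + 1 by norm_num, exp_add]
      nlinarith [add_one_le_exp (1 : ℝ)]
    _ = exp (2 * n) := by rw [← exp_nat_mul, mul_comm]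
    _ ≤ exp (z * ((9 / 8) ^ n - 1)) :=
      exp_le_exp.2 (by nlinarith [mul_le_mul_of_nonneg_left hpow (by linarith : 0 ≤ z)])
  calc 2 ^ n * exp (-z * (9 / 8) ^ n) = 4 ^ n * exp (-z * (9 / 8) ^ n) * (1 / 2) ^ n := by
        rw [mul_right_comm, ← mul_pow]; norm_num
    _ ≤ exp (z * ((9 / 8) ^ n - 1)) * exp (-z * (9 / 8) ^ n) * (1 / 2) ^ n := by gcongr
    _ = exp (-z) * (1 / 2) ^ n := by rw [← exp_add]; ring_nf

lemma two_mul_exp_neg_sq_div_le {ε u c : ℝ} {d : ℕ} (hd : 1 ≤ d) (hc0 : 0 ≤ c) (hc1 : c ≤ 1)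
    (hcε : c ≤ ε / 18) (hcε2 : c ≤ ε ^ 2 / 72) (hu : 0 ≤ u) :
    2 * exp (-((ε * (d - 1) + u) / 3) ^ 2 / (2 * d)) ≤ exp (89 - c * (d + u)) := by
  have h2 : 2 ≤ exp 1 := by linarith [add_one_le_exp (1 : ℝ)]
  refine (mul_le_mul_of_nonneg_right h2 (exp_nonneg _)).trans ?_
  rw [← exp_add, exp_le_exp]
  obtain rfl | hd2 := hd.eq_or_lt
  · norm_num
    nlinarith [sq_nonneg (u - 9)]
  have hd2 : (2 : ℝ) ≤ d := by exact_mod_cast hd2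
  have hε : 0 ≤ ε := by linarith
  have hw : ε * d / 2 + u ≤ ε * (d - 1) + u := by nlinarith
  have key : c * (d + u) ≤ ((ε * (d - 1) + u) / 3) ^ 2 / (2 * d) := by
    rw [le_div_iff₀ (by positivity)]
    nlinarith [mul_le_mul hw hw (by positivity) (by nlinarith), mul_nonneg hε hu,
      mul_le_mul_of_nonneg_right hcε2 (by positivity : (0 : ℝ) ≤ d ^ 2),
      mul_le_mul_of_nonneg_right hcε (by positivity : (0 : ℝ) ≤ d * u)]
  rw [neg_div]
  linarith

def incrementBlockEvent {Ω : Type*} (B : ℝ → Ω → ℝ) (ε u : ℝ) (j d : ℕ) : Set Ω :=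
  {ω | ∃ s ∈ Set.Icc (j : ℝ) (j + 1), ∃ s' ∈ Set.Icc ((j : ℝ) + d) (j + d + 1), s ≤ s' ∧
    ε * (s' - s) + u < |B s' ω - B s ω|}

lemma mem_incrementBlockEvent_floor {Ω : Type*} {B : ℝ → Ω → ℝ} {ε u s s' : ℝ} {ω : Ω} (hs : 0 ≤ s)
    (hss' : s ≤ s') (h : ε * (s' - s) + u < |B s' ω - B s ω|) :
    ω ∈ incrementBlockEvent B ε u ⌊s⌋₊ (⌊s'⌋₊ - ⌊s⌋₊) := by
  have hfloor : ((⌊s⌋₊ : ℕ) : ℝ) + ((⌊s'⌋₊ - ⌊s⌋₊ : ℕ) : ℝ) = ⌊s'⌋₊ := by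
    rw [Nat.cast_sub (Nat.floor_le_floor hss'), add_sub_cancel]
  refine ⟨s, ⟨Nat.floor_le hs, (Nat.lt_floor_add_one s).le⟩, s', ?_, hss', h⟩
  rw [hfloor]
  exact ⟨Nat.floor_le (hs.trans hss'), (Nat.lt_floor_add_one s').le⟩

lemma setOf_sInf_barrier_nonpos_subset {Ω : Type*} {B : ℝ → Ω → ℝ} (hB0 : ∀ ω, B 0 ω = 0)
    {ε u : ℝ} (hu : 0 < u) :
    {ω | sInf ((fun t ↦ ε * t + u - |B t ω|) '' Set.Ici 0) ≤ 0} ⊆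
      ⋃ d : ℕ, incrementBlockEvent B ε (u / 2) 0 d := by
  intro ω hω
  obtain ⟨_, ⟨t, ht, rfl⟩, hlt⟩ :=
    exists_lt_of_csInf_lt (Set.nonempty_Ici.image _) (hω.trans_lt (half_pos hu))
  have := mem_incrementBlockEvent_floor (B := B) (ω := ω) (ε := ε) (u := u / 2) le_rfl ht
    (by simp only [hB0, sub_zero] at hlt ⊢; linarith)
  simpa using Set.mem_iUnion_of_mem _ this

lemma setOf_sInf_increment_barrier_nonpos_subset {Ω : Type*} {B : ℝ → Ω → ℝ} {ε u t : ℝ}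
    (hu : 0 < u) (ht : 0 ≤ t) :
    {ω | sInf ((fun p : ℝ × ℝ ↦ ε * (p.2 - p.1) + u - |B p.2 ω - B p.1 ω|) ''
        {p : ℝ × ℝ | 0 ≤ p.1 ∧ p.1 ≤ p.2 ∧ p.2 ≤ t}) ≤ 0} ⊆
      ⋃ j ∈ range (⌊t⌋₊ + 1), ⋃ d : ℕ, incrementBlockEvent B ε (u / 2) j d := by
  intro ω hω
  obtain ⟨_, ⟨p, ⟨hp1, hp12, hp2⟩, rfl⟩, hlt⟩ :=
    exists_lt_of_csInf_lt (Set.Nonempty.image _ ⟨(0, 0), by simp [ht]⟩)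
      (hω.trans_lt (half_pos hu))
  simp only [Set.mem_iUnion, mem_range]
  exact ⟨⌊p.1⌋₊, Nat.lt_succ_of_le (Nat.floor_le_floor (hp12.trans hp2)), _,
    mem_incrementBlockEvent_floor hp1 hp12 (by linarith)⟩

namespace IsStdBM

variable {Ω : Type} [MeasurableSpace Ω] {P : Measure Ω} {B : ℝ → Ω → ℝ}

lemma measure_lt_abs_sub_le [IsFiniteMeasure P] (hB : IsStdBM P B) {s t y : ℝ} (hs : 0 ≤ s)
    (hst : s ≤ t) (hy : 0 ≤ y) :
    P {ω | y < |B t ω - B s ω|} ≤ ENNReal.ofReal (2 * exp (-y ^ 2 / (2 * (t - s)))) := by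
  have := (hasSubgaussianMGF_of_map_eq_gaussianReal (hB.2.2.2.2 s t hs hst)).measure_lt_abs_le hy
  rwa [Real.coe_toNNReal _ (sub_nonneg.2 hst)] at this

lemma measure_exists_lt_abs_sub_le [IsProbabilityMeasure P] (hB : IsStdBM P B) {a x : ℝ}
    (ha : 0 ≤ a) (hx : 0 ≤ x) :
    P {ω | ∃ s ∈ Set.Icc a (a + 1), x < |B s ω - B a ω|} ≤
      ENNReal.ofReal (exp (16 - x ^ 2 / 32)) := by
  set z := x ^ 2 / 32
  rcases lt_or_ge z 16 with hz | hz
  · exact prob_le_one.trans (ENNReal.one_le_ofReal.2 (one_le_exp (by linarith)))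
  set D : ℕ → ℕ → Set Ω := fun n j ↦
    {ω | x / 4 * (3 / 4) ^ n < |B (a + (j + 1) / 2 ^ n) ω - B (a + j / 2 ^ n) ω|}
  have hsub : {ω | ∃ s ∈ Set.Icc a (a + 1), x < |B s ω - B a ω|} ⊆
      ⋃ n, ⋃ j ∈ range (2 ^ n), D n j := by
    rintro ω ⟨s, hs, hxs⟩
    obtain ⟨n, j, hj, h⟩ := exists_lt_abs_dyadic_increment (hB.2.1 ω) hx hs hxs
    exact Set.mem_iUnion.2 ⟨n, Set.mem_iUnion₂.2 ⟨j, mem_range.2 hj, h⟩⟩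
  have hD (n j : ℕ) : P (D n j) ≤ ENNReal.ofReal (2 * exp (-z * (9 / 8) ^ n)) := by
    refine (hB.measure_lt_abs_sub_le (by positivity) (by gcongr; linarith)
      (by positivity)).trans (le_of_eq ?_)
    have h98 : (9 / 8 : ℝ) ^ n = ((3 / 4) ^ n) ^ 2 * 2 ^ n := by
      rw [← pow_mul, mul_comm n, pow_mul, ← mul_pow]; norm_num
    rw [h98]
    congr 3
    field_simp
    ring
  calc P {ω | ∃ s ∈ Set.Icc a (a + 1), x < |B s ω - B a ω|}
      ≤ ∑' n, ∑ j ∈ range (2 ^ n), P (D n j) :=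
        (measure_mono hsub).trans <| (measure_iUnion_le _).trans <|
          ENNReal.tsum_le_tsum fun n ↦ measure_biUnion_finset_le _ _
    _ ≤ ∑' n : ℕ, ENNReal.ofReal (2 * exp (-z) * (1 / 2) ^ n) := by
        refine ENNReal.tsum_le_tsum fun n ↦ (sum_le_sum fun j _ ↦ hD n j).trans ?_
        rw [sum_const, card_range, nsmul_eq_mul, ← ENNReal.ofReal_natCast,
          ← ENNReal.ofReal_mul (by positivity)]
        refine ENNReal.ofReal_le_ofReal ?_
        push_cast
        nlinarith [two_pow_mul_exp_neg_le hz n]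
    _ = ENNReal.ofReal (4 * exp (-z)) := by
        rw [← ENNReal.ofReal_tsum_of_nonneg (fun n ↦ by positivity)
          ((summable_geometric_two).mul_left _), tsum_mul_left, tsum_geometric_two]
        ring_nf
    _ ≤ ENNReal.ofReal (exp (16 - z)) := by
        refine ENNReal.ofReal_le_ofReal ?_
        rw [sub_eq_add_neg, exp_add]
        gcongr
        linarith [add_one_le_exp (16 : ℝ)]

lemma measure_incrementBlockEvent_le [IsProbabilityMeasure P] (hB : IsStdBM P B) {ε u c : ℝ}
    (hc0 : 0 ≤ c) (hc1 : c ≤ 1) (hcε : c ≤ ε / 18) (hcε2 : c ≤ ε ^ 2 / 72) (hu : 0 ≤ u)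
    (j d : ℕ) :
    P (incrementBlockEvent B ε u j d) ≤ ENNReal.ofReal (3 * exp (89 - c * (d + u))) := by
  set w := ε * max ((d : ℝ) - 1) 0 + u
  have hε : 0 ≤ ε := by linarith
  have hw0 : 0 ≤ w := by positivity
  have hw : c * (d + u) - 1 ≤ w := by
    nlinarith [le_max_left ((d : ℝ) - 1) 0, le_max_right ((d : ℝ) - 1) 0]
  set O : ℝ → Set Ω := fun a ↦ {ω | ∃ s ∈ Set.Icc a (a + 1), w / 3 < |B s ω - B a ω|}
  set I : Set Ω := {ω | w / 3 < |B (j + d) ω - B j ω|}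
  have hO (a : ℝ) (ha : 0 ≤ a) : P (O a) ≤ ENNReal.ofReal (exp (89 - c * (d + u))) :=
    (hB.measure_exists_lt_abs_sub_le ha (by positivity)).trans <| ENNReal.ofReal_le_ofReal <|
      exp_le_exp.2 (by nlinarith [sq_nonneg (w - 144)])
  have hI : P I ≤ ENNReal.ofReal (exp (89 - c * (d + u))) := by
    rcases Nat.eq_zero_or_pos d with rfl | hd
    · have : I = ∅ := by
        ext ω
        simp [I, not_lt.2 (div_nonneg hw0 zero_le_three)]
      simp [this]
    have hwd : w = ε * (d - 1) + u := by
      simp only [w, max_eq_left (sub_nonneg.2 (Nat.one_le_cast.2 hd))]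
    refine (hB.measure_lt_abs_sub_le (Nat.cast_nonneg j) (by simp) (by positivity)).trans ?_
    rw [add_sub_cancel_left, hwd]
    exact ENNReal.ofReal_le_ofReal (two_mul_exp_neg_sq_div_le hd hc0 hc1 hcε hcε2 hu)
  have hsub : incrementBlockEvent B ε u j d ⊆ O j ∪ I ∪ O (j + d) := by
    rintro ω ⟨s, hs, s', hs', hss', hω⟩
    have hgap : w ≤ ε * (s' - s) + u := by
      have : max ((d : ℝ) - 1) 0 ≤ s' - s := max_le (by linarith [hs.2, hs'.1]) (by linarith)
      nlinarith
    have htri : |B s' ω - B s ω| ≤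
        |B s ω - B j ω| + |B (j + d) ω - B j ω| + |B s' ω - B (j + d) ω| := by
      calc |B s' ω - B s ω|
          = |-(B s ω - B j ω) + (B (j + d) ω - B j ω) + (B s' ω - B (j + d) ω)| := by ring_nf
        _ ≤ _ := by simpa only [abs_neg] using abs_add_three (-(B s ω - B j ω)) _ _
    by_contra hnot
    simp only [Set.mem_union, not_or, O, I, Set.mem_ofPred_eq, not_exists, not_and,
      _root_.not_lt] at hnot
    linarith [hnot.1.1 s hs, hnot.1.2, hnot.2 s' hs']
  calc P (incrementBlockEvent B ε u j d) ≤ P (O j) + P I + P (O (j + d)) :=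
        (measure_mono hsub).trans <| (measure_union_le _ _).trans <|
          by gcongr; exact measure_union_le _ _
    _ ≤ ENNReal.ofReal (exp (89 - c * (d + u))) + ENNReal.ofReal (exp (89 - c * (d + u))) +
          ENNReal.ofReal (exp (89 - c * (d + u))) :=
        add_le_add (add_le_add (hO j (Nat.cast_nonneg j)) hI) (hO _ (by positivity))
    _ = ENNReal.ofReal (3 * exp (89 - c * (d + u))) := by
        rw [← ENNReal.ofReal_add (by positivity) (by positivity),
          ← ENNReal.ofReal_add (by positivity) (by positivity)]
        ring_nf

lemma exists_measure_iUnion_incrementBlockEvent_le [IsProbabilityMeasure P] (hB : IsStdBM P B)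
    {ε : ℝ} (hε : 0 < ε) :
    ∃ C ≥ (1 : ℝ), ∃ c > (0 : ℝ), ∀ u ≥ (0 : ℝ), ∀ j : ℕ,
      P (⋃ d : ℕ, incrementBlockEvent B ε u j d) ≤ ENNReal.ofReal (C * exp (-c * u)) := by
  set c := min 1 (min (ε / 18) (ε ^ 2 / 72))
  have hc0 : 0 < c := by positivity
  have hr : exp (-c) < 1 := exp_lt_one_iff.2 (neg_lt_zero.2 hc0)
  refine ⟨3 * exp 89 / (1 - exp (-c)), ?_, c, hc0, fun u hu j ↦ ?_⟩
  · rw [ge_iff_le, le_div_iff₀ (sub_pos.2 hr)]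
    nlinarith [exp_pos (-c), add_one_le_exp 89]
  have hterm (d : ℕ) :
      3 * exp (89 - c * (d + u)) = 3 * exp 89 * exp (-c * u) * exp (-c) ^ d := by
    rw [← exp_nat_mul, mul_assoc, ← exp_add, mul_assoc, ← exp_add]
    ring_nf
  calc P (⋃ d : ℕ, incrementBlockEvent B ε u j d)
      ≤ ∑' d : ℕ, ENNReal.ofReal (3 * exp 89 * exp (-c * u) * exp (-c) ^ d) :=
        (measure_iUnion_le _).trans <| ENNReal.tsum_le_tsum fun d ↦
          (hB.measure_incrementBlockEvent_le hc0.le (min_le_left _ _)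
            ((min_le_right _ _).trans (min_le_left _ _))
            ((min_le_right _ _).trans (min_le_right _ _)) hu j d).trans_eq (by rw [hterm])
    _ = ENNReal.ofReal (3 * exp 89 / (1 - exp (-c)) * exp (-c * u)) := by
        rw [← ENNReal.ofReal_tsum_of_nonneg (fun d ↦ by positivity)
          ((summable_geometric_of_lt_one (exp_nonneg _) hr).mul_left _), tsum_mul_left,
          tsum_geometric_of_lt_one (exp_nonneg _) hr]
        ring_nf

end IsStdBM

/-- Exponential bounds for a Brownian motion staying above the moving barrier
`-εt - u`, and for all of its increments staying above `-ε(s'-s) - u` on `[0,t]`. -/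
theorem stmt_2 {Ω : Type} [MeasurableSpace Ω] (P : Measure Ω) [IsProbabilityMeasure P]
    (B : ℝ → Ω → ℝ) (hB : IsStdBM P B) :
    ∀ ε : ℝ, 0 < ε → ∃ C₁ > (0 : ℝ), ∃ ε' > (0 : ℝ),
      (∀ u : ℝ, 0 ≤ u →
        P {ω | sInf ((fun t => ε * t + u - |B t ω|) '' Set.Ici (0 : ℝ)) ≤ 0} ≤
          ENNReal.ofReal (C₁ * Real.exp (-ε' * u))) ∧
      (∀ u t : ℝ, 0 < u → 0 ≤ t →
        P {ω | sInf ((fun p : ℝ × ℝ => ε * (p.2 - p.1) + u - |B p.2 ω - B p.1 ω|) ''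
            {p : ℝ × ℝ | 0 ≤ p.1 ∧ p.1 ≤ p.2 ∧ p.2 ≤ t}) ≤ 0} ≤
          ENNReal.ofReal (C₁ * (t + 1) * Real.exp (-ε' * u))) := by
  intro ε hε
  obtain ⟨C, hC, c, hc, hblock⟩ := hB.exists_measure_iUnion_incrementBlockEvent_le hε
  have hblock' (u : ℝ) (hu : 0 < u) (j : ℕ) : P (⋃ d : ℕ, incrementBlockEvent B ε (u / 2) j d) ≤
      ENNReal.ofReal (C * exp (-(c / 2) * u)) := by
    rw [show -(c / 2) * u = -c * (u / 2) by ring]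
    exact hblock _ (by positivity) j
  refine ⟨C, by linarith, c / 2, by positivity, fun u hu ↦ ?_, fun u t hu ht ↦ ?_⟩
  · obtain rfl | hu := hu.eq_or_lt
    · simpa using prob_le_one.trans (ENNReal.one_le_ofReal.2 hC)
    exact (measure_mono (setOf_sInf_barrier_nonpos_subset hB.2.2.1 hu)).trans (hblock' u hu 0)
  calc _ ≤ ∑ j ∈ range (⌊t⌋₊ + 1), P (⋃ d : ℕ, incrementBlockEvent B ε (u / 2) j d) :=
        (measure_mono (setOf_sInf_increment_barrier_nonpos_subset hu ht)).trans
          (measure_biUnion_finset_le _ _)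
    _ ≤ ∑ j ∈ range (⌊t⌋₊ + 1), ENNReal.ofReal (C * exp (-(c / 2) * u)) :=
        sum_le_sum fun j _ ↦ hblock' u hu j
    _ ≤ ENNReal.ofReal (C * (t + 1) * exp (-(c / 2) * u)) := by
        rw [sum_const, card_range, nsmul_eq_mul, ← ENNReal.ofReal_natCast,
          ← ENNReal.ofReal_mul (by positivity)]
        refine ENNReal.ofReal_le_ofReal ?_
        push_cast
        nlinarith [mul_le_mul_of_nonneg_right (Nat.floor_le ht)
          (mul_nonneg (by linarith : 0 ≤ C) (exp_pos (-(c / 2) * u)).le)]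
end
end

section
/- For every t ≥ 0: (i) for each ℓ = 2,…,5, Σ_{k=1}^{6} y_k(t) ≥ t − z_ℓ(0) − b_ℓ(t); and (ii) for each ℓ = 1,…,6, Σ_{k=1}^{6} y_k(t) ≥ (1/2)(t − z_ℓ(0) − b_ℓ(t)). -/
open MeasureTheory ProbabilityTheory
open scoped ENNReal NNReal

noncomputable section

/-! Nonnegativity of `z ℓ t` turns the equation for `z` into
`t - z ℓ 0 - b ℓ t ≤ (R y(t))_ℓ`. As `y(t) ≥ 0`, the right side is at most
`(max_j R ℓ j) * Σ_k y_k(t)`, and the entries of `R` are at most `2`, and at most `1`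
in rows `2,…,5`. -/

lemma Rmat_le_two {δ₁ δ₂ δ₃ δ₄ : ℝ} (hδ : DeltaCond δ₁ δ₂ δ₃ δ₄) (i j : Fin 6) :
    Rmat δ₁ δ₂ δ₃ δ₄ i j ≤ 2 := by
  obtain ⟨-, -, h3, h4, h5, h6, h7, h8⟩ := hδ
  fin_cases i <;> fin_cases j <;> simp [Rmat] <;> linarith

lemma Rmat_le_one {δ₁ δ₂ δ₃ δ₄ : ℝ} (hδ₃ : 0 ≤ δ₃) (i j : Fin 6)
    (hi1 : 1 ≤ i.1) (hi4 : i.1 ≤ 4) : Rmat δ₁ δ₂ δ₃ δ₄ i j ≤ 1 := by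
  fin_cases i <;> simp at hi1 hi4 <;> fin_cases j <;> simp [Rmat] <;> linarith

lemma sum_mul_le_mul_sum_of_le {ι : Type*} [Fintype ι] {a y : ι → ℝ} {c : ℝ}
    (ha : ∀ j, a j ≤ c) (hy : ∀ j, 0 ≤ y j) : ∑ j, a j * y j ≤ c * ∑ j, y j := by
  rw [Finset.mul_sum]
  exact Finset.sum_le_sum fun j _ => mul_le_mul_of_nonneg_right (ha j) (hy j)

lemma MonotoneOn.nonneg_of_eq_zero {f : ℝ → ℝ} (hf : MonotoneOn f (Set.Ici 0)) (h0 : f 0 = 0)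
    {t : ℝ} (ht : 0 ≤ t) : 0 ≤ f t :=
  h0 ▸ hf Set.self_mem_Ici ht ht

theorem stmt_3_general (δ₁ δ₂ δ₃ δ₄ : ℝ) (hδ : DeltaCond δ₁ δ₂ δ₃ δ₄)
    (b y z : Fin 6 → ℝ → ℝ)
    (heq : ∀ t : ℝ, 0 ≤ t → ∀ k, z k t =
        z k 0 + b k t + (-1) * t + ∑ j, Rmat δ₁ δ₂ δ₃ δ₄ k j * y j t)
    (hy0 : ∀ k, y k 0 = 0)
    (hymono : ∀ k, MonotoneOn (y k) (Set.Ici (0 : ℝ)))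
    (hznn : ∀ k (t : ℝ), 0 ≤ t → 0 ≤ z k t) :
    ∀ t : ℝ, 0 ≤ t →
      (∀ ℓ : Fin 6, 1 ≤ ℓ.1 → ℓ.1 ≤ 4 → t - z ℓ 0 - b ℓ t ≤ ∑ k, y k t) ∧
      (∀ ℓ : Fin 6, (1 / 2) * (t - z ℓ 0 - b ℓ t) ≤ ∑ k, y k t) := by
  intro t ht
  have hynn : ∀ k, 0 ≤ y k t := fun k => (hymono k).nonneg_of_eq_zero (hy0 k) ht
  have hle : ∀ ℓ, t - z ℓ 0 - b ℓ t ≤ ∑ j, Rmat δ₁ δ₂ δ₃ δ₄ ℓ j * y j t := fun ℓ => by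
    linarith [hznn ℓ t ht, heq t ht ℓ]
  refine ⟨fun ℓ hl1 hl4 => ?_, fun ℓ => ?_⟩
  · have hR : ∑ j, Rmat δ₁ δ₂ δ₃ δ₄ ℓ j * y j t ≤ 1 * ∑ k, y k t :=
      sum_mul_le_mul_sum_of_le (fun j => Rmat_le_one hδ.2.2.1.le ℓ j hl1 hl4) hynn
    linarith [hle ℓ]
  · have hR := sum_mul_le_mul_sum_of_le (Rmat_le_two hδ ℓ) hynn
    linarith [hle ℓ]

/-- Elementary lower bounds on `Σ_k y_k(t)` for a (deterministic) path satisfying the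
SRBM-type equations, in terms of the coordinates `ℓ = 2,…,5` (indices `1,…,4`) and
`ℓ = 1,…,6` respectively. -/
theorem stmt_3 (δ₁ δ₂ δ₃ δ₄ : ℝ) (hδ : DeltaCond δ₁ δ₂ δ₃ δ₄)
    (b y z : Fin 6 → ℝ → ℝ)
    (hbc : ∀ k, Continuous (b k)) (hyc : ∀ k, Continuous (y k))
    (hzc : ∀ k, Continuous (z k))
    (hb0 : ∀ k, b k 0 = 0)
    (heq : ∀ t : ℝ, 0 ≤ t → ∀ k, z k t =
        z k 0 + b k t + (-1) * t + ∑ j, Rmat δ₁ δ₂ δ₃ δ₄ k j * y j t)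
    (hy0 : ∀ k, y k 0 = 0)
    (hymono : ∀ k, MonotoneOn (y k) (Set.Ici (0 : ℝ)))
    (hrefl : ∀ k (t₁ t₂ : ℝ), 0 ≤ t₁ → t₁ < t₂ → y k t₁ < y k t₂ →
        ∃ s, t₁ ≤ s ∧ s ≤ t₂ ∧ z k s = 0)
    (hznn : ∀ k (t : ℝ), 0 ≤ t → 0 ≤ z k t) :
    ∀ t : ℝ, 0 ≤ t →
      (∀ ℓ : Fin 6, 1 ≤ ℓ.1 → ℓ.1 ≤ 4 → t - z ℓ 0 - b ℓ t ≤ ∑ k, y k t) ∧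
      (∀ ℓ : Fin 6, (1 / 2) * (t - z ℓ 0 - b ℓ t) ≤ ∑ k, y k t) :=
  stmt_3_general δ₁ δ₂ δ₃ δ₄ hδ b y z heq hy0 hymono hznn
end
end

section
/- Define N₆(t) = Y₁(t) and N_k(t) = 0 for k ≠ 6. Then: (i) for each given ε > 0 there exist constants C₁ > 0 and ε' > 0 such that, for all t ≥ 0 and k = 2,…,6, P(Y_k(t) + (1−δ₃)Σ_{ℓ=2, ℓ≠k}^{6} Y_ℓ(t) ≥ (1+ε)t + δ₁N_k(t)) ≤ C₁e^{−ε't}; and (ii) there exist constants C₁ > 0 and ε' > 0 such that, for all t ≥ 0 and k = 2,…,6, P(Y_k(t) ≤ t/5 − (1/δ₃)(Z_k(0) + 2Y₁(t))) ≤ C₁e^{−ε't}. -/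
open MeasureTheory ProbabilityTheory
open scoped ENNReal NNReal

noncomputable section

/-!
On a path where the six Brownian motions stay within `κt` of `0` on `[0, t]`, the SRBM equations
alone control `Y`: let `σ_k ≤ t` be the last zero of `Z_k`, so that `Y_k(σ_k) = Y_k(t)`, and let
`σ_m` be the largest of them. Comparing row `k` of the equation at `0` and `σ_k`, and row `m` at
`σ_k` and `σ_m`, gives `(1 - δ₃) ∑_{ℓ ≥ 2} Y_ℓ(t) + δ₃ Y_k(t) ≤ t + 3κt`. This is (i) as soon as
`3κ < ε`; summed over `k` and put back into row `k` at time `t` (where `Z_k(t) ≥ 0`) it gives (ii)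
for `κ` of order `δ₃²`. The probability that a Brownian motion leaves `[-κt, κt]` before time `t`
is at most `4 exp (-κ²t/2)`, by Lévy's maximal inequality on dyadic grids and the Gaussian
Chernoff bound.
-/

open Set Filter Topology

lemma hasSubgaussianMGF_id_gaussianReal (v : ℝ≥0) :
    HasSubgaussianMGF id v (gaussianReal 0 v) where
  integrable_exp_mul t := integrable_exp_mul_gaussianReal t
  mgf_le t := by simp [mgf_id_gaussianReal]

lemma half_le_measure_Ici_zero_of_map_neg {μ : Measure ℝ} [IsProbabilityMeasure μ]
    (hμ : μ.map (fun x => -x) = μ) : 1 / 2 ≤ μ (Ici 0) := by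
  have hsymm : μ (Iic 0) = μ (Ici 0) := by
    conv_rhs => rw [← hμ]
    rw [Measure.map_apply measurable_neg measurableSet_Ici]
    congr 1
    ext x
    simp
  have hcover : 1 ≤ μ (Ici 0) * 2 := by
    calc 1 = μ (Ici 0 ∪ Iic 0) := by rw [Ici_union_Iic, measure_univ]
      _ ≤ μ (Ici 0) + μ (Iic 0) := measure_union_le _ _
      _ = μ (Ici 0) * 2 := by rw [hsymm, mul_two]
  exact ENNReal.div_le_of_le_mul hcover

lemma half_le_gaussianReal_Ici_zero (v : ℝ≥0) : 1 / 2 ≤ gaussianReal 0 v (Ici 0) :=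
  half_le_measure_Ici_zero_of_map_neg (by simpa using gaussianReal_map_neg (μ := 0) (v := v))

lemma measurable_sub_of_measurable_increments {Ω : Type*} {m : MeasurableSpace Ω}
    {S : ℕ → Ω → ℝ} {k l : ℕ} (hkl : k ≤ l)
    (hinc : ∀ j ∈ Finset.Ico k l, Measurable[m] (S (j + 1) - S j)) :
    Measurable[m] (S l - S k) := by
  rw [← Finset.sum_Ico_sub S hkl, Finset.sum_fn]
  exact Finset.measurable_sum _ hinc

section FirstExceed

variable {Ω : Type*} (S : ℕ → Ω → ℝ) (a : ℝ)

def firstExceed (k : ℕ) : Set Ω :=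
  {ω | (∀ j < k, S j ω ≤ a) ∧ a < S k ω}

lemma pairwiseDisjoint_firstExceed (s : Set ℕ) : s.PairwiseDisjoint (firstExceed S a) := by
  intro k _ l _ hkl
  refine Set.disjoint_left.2 fun ω hk hl => ?_
  rcases lt_or_gt_of_ne hkl with h | h
  · exact (hl.1 k h).not_gt hk.2
  · exact (hk.1 l h).not_gt hl.2

lemma setOf_exists_lt_eq_biUnion_firstExceed (n : ℕ) :
    {ω | ∃ k ≤ n, a < S k ω} = ⋃ k ∈ Finset.Iic n, firstExceed S a k := by
  ext ω
  simp only [mem_ofPred_eq, mem_iUnion, Finset.mem_Iic, exists_prop]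
  constructor
  · rintro ⟨k, hkn, hk⟩
    have hex : ∃ k, a < S k ω := ⟨k, hk⟩
    exact ⟨Nat.find hex, (Nat.find_min' hex hk).trans hkn,
      fun j hj => not_lt.1 (Nat.find_min hex hj), Nat.find_spec hex⟩
  · rintro ⟨k, hkn, -, hk⟩
    exact ⟨k, hkn, hk⟩

lemma measurableSet_firstExceed {m : MeasurableSpace Ω} {k : ℕ}
    (hS : ∀ j ≤ k, Measurable[m] (S j)) : MeasurableSet[m] (firstExceed S a k) := by
  have hforall : {ω | ∀ j < k, S j ω ≤ a} = ⋂ j ∈ Finset.range k, {ω | S j ω ≤ a} := by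
    ext ω; simp
  change MeasurableSet ({ω | ∀ j < k, S j ω ≤ a} ∩ {ω | a < S k ω})
  refine MeasurableSet.inter ?_ (measurableSet_lt measurable_const (hS k le_rfl))
  rw [hforall]
  exact Finset.measurableSet_biInter _ fun j hj =>
    measurableSet_le (hS j (Finset.mem_range.1 hj).le) measurable_const

end FirstExceed

section Levy

variable {Ω : Type*} [MeasurableSpace Ω] {P : Measure Ω} {S : ℕ → Ω → ℝ} {n : ℕ}

lemma indep_iSup_comap_sub (hS : ∀ k, Measurable (S k)) (hS0 : S 0 = 0)
    (hind : iIndepFun (fun i : Fin n => S (i + 1) - S i) P) {k : ℕ} (hkn : k ≤ n) :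
    Indep (⨆ j ≤ k, MeasurableSpace.comap (S j) inferInstance)
      (MeasurableSpace.comap (S n - S k) inferInstance) P := by
  let σ (T : Set (Fin n)) : MeasurableSpace Ω :=
    ⨆ i ∈ T, MeasurableSpace.comap (S (i + 1) - S i) inferInstance
  have hinc {T : Set (Fin n)} {i : ℕ} (hi : i < n) (hiT : ⟨i, hi⟩ ∈ T) :
      Measurable[σ T] (S (i + 1) - S i) :=
    (comap_measurable _).mono (le_iSup₂ (f := fun (l : Fin n) (_ : l ∈ T) =>
      MeasurableSpace.comap (S (l + 1) - S l) inferInstance) _ hiT) le_rfl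
  have hsplit : Indep (σ {i | (i : ℕ) < k}) (σ {i | k ≤ (i : ℕ)}) P :=
    indep_iSup_of_disjoint (fun i => ((hS _).sub (hS _)).comap_le) hind
      (Set.disjoint_left.2 fun i (hi : (i : ℕ) < k) (hi' : k ≤ (i : ℕ)) => (not_le.2 hi) hi')
  refine indep_of_indep_of_le_right (indep_of_indep_of_le_left hsplit ?_) ?_
  · refine iSup₂_le fun j hj => Measurable.comap_le ?_
    rw [← sub_zero (S j), ← hS0]
    refine measurable_sub_of_measurable_increments (Nat.zero_le j) fun i hi => ?_
    rw [Finset.mem_Ico] at hi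
    exact hinc (by omega) (show i < k by omega)
  · refine Measurable.comap_le (measurable_sub_of_measurable_increments hkn fun i hi => ?_)
    rw [Finset.mem_Ico] at hi
    exact hinc hi.2 (show k ≤ i from hi.1)

/-- Lévy's maximal inequality. -/
theorem measure_exists_lt_le_two_mul (hS : ∀ k, Measurable (S k)) (hS0 : S 0 = 0)
    (hind : iIndepFun (fun i : Fin n => S (i + 1) - S i) P)
    (hhalf : ∀ k ≤ n, 1 / 2 ≤ P {ω | S k ω ≤ S n ω}) (a : ℝ) :
    P {ω | ∃ k ≤ n, a < S k ω} ≤ 2 * P {ω | a < S n ω} := by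
  let E := firstExceed S a
  let T (k : ℕ) : Set Ω := {ω | S k ω ≤ S n ω}
  have hE (k : ℕ) : MeasurableSet[⨆ j ≤ k, MeasurableSpace.comap (S j) inferInstance] (E k) :=
    measurableSet_firstExceed S a fun j hj =>
      (comap_measurable (S j)).mono (le_iSup₂ (f := fun j (_ : j ≤ k) =>
        MeasurableSpace.comap (S j) inferInstance) j hj) le_rfl
  have hT (k : ℕ) : MeasurableSet[MeasurableSpace.comap (S n - S k) inferInstance] (T k) := by
    have : T k = (S n - S k) ⁻¹' Ici 0 := by ext ω; simp [T]
    rw [this]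
    exact measurableSet_preimage (comap_measurable _) measurableSet_Ici
  have hfirst (k : ℕ) (hk : k ≤ n) : P (E k) ≤ 2 * P (E k ∩ T k) := by
    rw [(Indep_iff _ _ _).1 (indep_iSup_comap_sub hS hS0 hind hk) _ _ (hE k) (hT k)]
    calc P (E k) = 2 * (1 / 2) * P (E k) := by
          rw [ENNReal.mul_div_cancel two_ne_zero ENNReal.ofNat_ne_top, one_mul]
      _ ≤ 2 * P (T k) * P (E k) := by gcongr; exact hhalf k hk
      _ = 2 * (P (E k) * P (T k)) := by ring
  have hmeasE (k : ℕ) : MeasurableSet (E k) :=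
    iSup₂_le (fun j _ => (hS j).comap_le) _ (hE k)
  have hmeasT (k : ℕ) : MeasurableSet (T k) := measurableSet_le (hS k) (hS n)
  calc P {ω | ∃ k ≤ n, a < S k ω} = ∑ k ∈ Finset.Iic n, P (E k) := by
        rw [setOf_exists_lt_eq_biUnion_firstExceed,
          measure_biUnion_finset (pairwiseDisjoint_firstExceed S a _) fun k _ => hmeasE k]
    _ ≤ ∑ k ∈ Finset.Iic n, 2 * P (E k ∩ T k) :=
        Finset.sum_le_sum fun k hk => hfirst k (Finset.mem_Iic.1 hk)
    _ = 2 * P (⋃ k ∈ Finset.Iic n, E k ∩ T k) := by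
        rw [measure_biUnion_finset, Finset.mul_sum]
        · exact (pairwiseDisjoint_firstExceed S a _).mono fun k => inter_subset_left
        · exact fun k _ => (hmeasE k).inter (hmeasT k)
    _ ≤ 2 * P {ω | a < S n ω} := by
        gcongr
        simp only [iUnion_subset_iff]
        rintro k - ω ⟨⟨-, hk⟩, hkn⟩
        exact hk.trans_le hkn

end Levy

lemma Continuous.exists_lt_at_dyadic {f : ℝ → ℝ} (hf : Continuous f) {t s a : ℝ} (ht : 0 < t)
    (hs : s ∈ Icc 0 t) (h : a < f s) : ∃ m k : ℕ, k ≤ 2 ^ m ∧ a < f (k * t / 2 ^ m) := by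
  obtain ⟨ε, hε, hball⟩ := Metric.eventually_nhds_iff.1 ((hf.tendsto s).eventually (lt_mem_nhds h))
  obtain ⟨m, hm⟩ := pow_unbounded_of_one_lt (t / ε) one_lt_two
  have h2m : (0 : ℝ) < 2 ^ m := by positivity
  set x := s * 2 ^ m / t with hx
  have hxs : x * t / 2 ^ m = s := by rw [hx]; field_simp
  refine ⟨m, ⌊x⌋₊, Nat.floor_le_of_le ?_, hball ?_⟩
  · rw [hx, div_le_iff₀ ht]
    push_cast
    nlinarith [hs.2]
  · have hlow : s - t / 2 ^ m < ⌊x⌋₊ * t / 2 ^ m := by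
      rw [← hxs, ← sub_div, ← sub_one_mul]
      gcongr
      linarith [Nat.lt_floor_add_one x]
    have hup : ⌊x⌋₊ * t / 2 ^ m ≤ s := by
      rw [← hxs]
      gcongr
      exact Nat.floor_le (div_nonneg (mul_nonneg hs.1 h2m.le) ht.le)
    have hstep : t / 2 ^ m < ε := by
      rw [div_lt_iff₀ h2m]
      rw [div_lt_iff₀ hε] at hm
      linarith
    rw [Real.dist_eq, abs_sub_lt_iff]
    constructor <;> linarith

namespace IsStdBM

variable {Ω : Type} [MeasurableSpace Ω] {P : Measure Ω} {B : ℝ → Ω → ℝ}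

lemma map_eq (hB : IsStdBM P B) {t : ℝ} (ht : 0 ≤ t) :
    P.map (B t) = gaussianReal 0 t.toNNReal := by
  simpa [hB.2.2.1] using hB.2.2.2.2 0 t le_rfl ht

lemma neg (hB : IsStdBM P B) : IsStdBM P (fun t ω => -B t ω) := by
  obtain ⟨hmeas, hcont, hzero, hind, hlaw⟩ := hB
  refine ⟨fun t => (hmeas t).neg, fun ω => (hcont ω).neg, fun ω => by simp [hzero],
    fun n u hu hu0 => ?_, fun s t hs hst => ?_⟩
  · have := (hind n u hu hu0).comp (fun _ x => -x) fun _ => measurable_neg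
    convert this using 2 with i
    ext ω
    simp only [Function.comp_apply]
    ring
  · have hsub : (fun ω => -B t ω - -B s ω) = (fun x => -x) ∘ fun ω => B t ω - B s ω := by
      ext ω; simp only [Function.comp_apply]; ring
    have hinc : Measurable fun ω => B t ω - B s ω := (hmeas t).sub (hmeas s)
    rw [hsub, ← Measure.map_map measurable_neg hinc, hlaw s t hs hst]
    simpa using gaussianReal_map_neg (μ := 0) (v := (t - s).toNNReal)

lemma measure_lt_le [IsFiniteMeasure P] (hB : IsStdBM P B) {t a : ℝ} (ht : 0 ≤ t) (ha : 0 ≤ a) :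
    P {ω | a < B t ω} ≤ ENNReal.ofReal (Real.exp (-a ^ 2 / (2 * t))) := by
  have hsub : HasSubgaussianMGF (B t) t.toNNReal P := by
    rw [← HasSubgaussianMGF.id_map_iff (hB.1 t).aemeasurable, hB.map_eq ht]
    exact hasSubgaussianMGF_id_gaussianReal _
  calc P {ω | a < B t ω} ≤ P {ω | a ≤ B t ω} := measure_mono fun ω (h : a < B t ω) => h.le
    _ = ENNReal.ofReal (P.real {ω | a ≤ B t ω}) := (ofReal_measureReal).symm
    _ ≤ ENNReal.ofReal (Real.exp (-a ^ 2 / (2 * t))) := by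
      gcongr
      simpa [Real.coe_toNNReal t ht] using hsub.measure_ge_le ha

lemma measure_exists_grid_lt_le (hB : IsStdBM P B) {u : ℕ → ℝ} (hu : Monotone u) (hu0 : u 0 = 0)
    (n : ℕ) (a : ℝ) :
    P {ω | ∃ k ≤ n, a < B (u k) ω} ≤ 2 * P {ω | a < B (u n) ω} := by
  obtain ⟨hmeas, -, hzero, hind, hlaw⟩ := hB
  have hu_nonneg (k : ℕ) : 0 ≤ u k := hu0 ▸ hu (Nat.zero_le k)
  refine measure_exists_lt_le_two_mul (S := fun k => B (u k)) (fun k => hmeas _)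
    (by ext ω; simp [hu0, hzero]) (hind n u hu hu_nonneg) (fun k hk => ?_) a
  have hset : {ω | B (u k) ω ≤ B (u n) ω} = (fun ω => B (u n) ω - B (u k) ω) ⁻¹' Ici 0 := by
    ext ω; simp
  have hinc : Measurable fun ω => B (u n) ω - B (u k) ω := (hmeas _).sub (hmeas _)
  rw [hset, ← Measure.map_apply hinc measurableSet_Ici,
    hlaw _ _ (hu_nonneg k) (hu hk)]
  exact half_le_gaussianReal_Ici_zero _

lemma measure_exists_lt_le (hB : IsStdBM P B) {t : ℝ} (ht : 0 < t) (a : ℝ) :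
    P {ω | ∃ s ∈ Icc 0 t, a < B s ω} ≤ 2 * P {ω | a < B t ω} := by
  let G (m : ℕ) : Set Ω := {ω | ∃ k : ℕ, k ≤ 2 ^ m ∧ a < B (k * t / 2 ^ m) ω}
  have hG : Monotone G := by
    refine monotone_nat_of_le_succ fun m ω ⟨k, hk, h⟩ => ⟨2 * k, by rw [pow_succ]; omega, ?_⟩
    convert h using 2
    push_cast
    field_simp
    ring
  calc P {ω | ∃ s ∈ Icc 0 t, a < B s ω} ≤ P (⋃ m, G m) :=
        measure_mono fun ω ⟨s, hs, h⟩ => mem_iUnion.2 ((hB.2.1 ω).exists_lt_at_dyadic ht hs h)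
    _ = ⨆ m, P (G m) := hG.measure_iUnion
    _ ≤ 2 * P {ω | a < B t ω} := iSup_le fun m => by
        have hu : Monotone fun k : ℕ => k * t / 2 ^ m := fun i j hij => by dsimp only; gcongr
        simpa [G] using hB.measure_exists_grid_lt_le hu (by simp) (2 ^ m) a

lemma measure_exists_lt_abs_le [IsFiniteMeasure P] (hB : IsStdBM P B) {t a : ℝ} (ht : 0 < t)
    (ha : 0 ≤ a) :
    P {ω | ∃ s ∈ Icc 0 t, a < |B s ω|} ≤ ENNReal.ofReal (4 * Real.exp (-a ^ 2 / (2 * t))) := by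
  have hsplit : {ω | ∃ s ∈ Icc 0 t, a < |B s ω|} ⊆
      {ω | ∃ s ∈ Icc 0 t, a < B s ω} ∪ {ω | ∃ s ∈ Icc 0 t, a < -B s ω} := by
    rintro ω ⟨s, hs, h⟩
    rcases lt_abs.1 h with h | h
    exacts [Or.inl ⟨s, hs, h⟩, Or.inr ⟨s, hs, h⟩]
  have hneg := hB.neg
  calc P {ω | ∃ s ∈ Icc 0 t, a < |B s ω|}
      ≤ P {ω | ∃ s ∈ Icc 0 t, a < B s ω} + P {ω | ∃ s ∈ Icc 0 t, a < -B s ω} :=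
        (measure_mono hsplit).trans (measure_union_le _ _)
    _ ≤ 2 * ENNReal.ofReal (Real.exp (-a ^ 2 / (2 * t)))
        + 2 * ENNReal.ofReal (Real.exp (-a ^ 2 / (2 * t))) := by
        gcongr
        · exact (hB.measure_exists_lt_le ht a).trans (by gcongr; exact hB.measure_lt_le ht.le ha)
        · exact (hneg.measure_exists_lt_le ht a).trans
            (by gcongr; exact hneg.measure_lt_le ht.le ha)
    _ = ENNReal.ofReal (4 * Real.exp (-a ^ 2 / (2 * t))) := by
        rw [ENNReal.ofReal_mul (by norm_num), ENNReal.ofReal_ofNat]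
        ring

end IsStdBM

lemma measure_le_of_ae_exists_lt_abs {Ω : Type} [MeasurableSpace Ω] {P : Measure Ω}
    [IsProbabilityMeasure P] {ι : Type*} [Fintype ι] [Nonempty ι] {B : ι → ℝ → Ω → ℝ}
    (hB : ∀ i, IsStdBM P (B i)) {κ t : ℝ} (hκ : 0 ≤ κ) (ht : 0 ≤ t) {E : Set Ω}
    (hE : 0 < t → ∀ᵐ ω ∂P, ω ∈ E → ∃ i, ∃ s ∈ Icc 0 t, κ * t < |B i s ω|) :
    P E ≤ ENNReal.ofReal (4 * Fintype.card ι * Real.exp (-(κ ^ 2 / 2) * t)) := by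
  rcases ht.eq_or_lt with rfl | ht
  · refine prob_le_one.trans (ENNReal.one_le_ofReal.2 ?_)
    have : (1 : ℝ) ≤ Fintype.card ι := Nat.one_le_cast.2 Fintype.card_pos
    simp only [mul_zero, Real.exp_zero, mul_one]
    linarith
  calc P E ≤ P (⋃ i, {ω | ∃ s ∈ Icc 0 t, κ * t < |B i s ω|}) :=
        measure_mono_ae ((hE ht).mono fun ω hω hωE => mem_iUnion.2 (hω hωE))
    _ ≤ ∑ i, P {ω | ∃ s ∈ Icc 0 t, κ * t < |B i s ω|} := measure_iUnion_fintype_le _ _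
    _ ≤ ∑ _i : ι, ENNReal.ofReal (4 * Real.exp (-(κ * t) ^ 2 / (2 * t))) :=
        Finset.sum_le_sum fun i _ => (hB i).measure_exists_lt_abs_le ht (by positivity)
    _ = ENNReal.ofReal (4 * Fintype.card ι * Real.exp (-(κ ^ 2 / 2) * t)) := by
        rw [Finset.sum_const, Finset.card_univ, nsmul_eq_mul, ← ENNReal.ofReal_natCast,
          ← ENNReal.ofReal_mul (by positivity)]
        congr 1
        field_simp

lemma exists_eq_at_last_zero {z y : ℝ → ℝ} (hz : Continuous z) (hy : Continuous y)
    (hmono : MonotoneOn y (Ici 0))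
    (hrefl : ∀ t₁ t₂, 0 ≤ t₁ → t₁ < t₂ → y t₁ < y t₂ → ∃ s, t₁ ≤ s ∧ s ≤ t₂ ∧ z s = 0)
    {t : ℝ} (ht : 0 ≤ t) : ∃ σ ∈ Icc 0 t, y σ = y t ∧ (σ = 0 ∨ z σ = 0) := by
  by_cases hzero : ∃ s ∈ Icc 0 t, z s = 0
  · let A := Icc 0 t ∩ z ⁻¹' {0}
    have hbdd : BddAbove A := ⟨t, fun s hs => hs.1.2⟩
    obtain ⟨⟨hσ0, hσt⟩, hzσ⟩ : sSup A ∈ A :=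
      (isClosed_Icc.inter (isClosed_singleton.preimage hz)).csSup_mem hzero hbdd
    refine ⟨sSup A, ⟨hσ0, hσt⟩, ?_, Or.inr hzσ⟩
    by_contra hne
    have hlt : y (sSup A) < y t := (hmono hσ0 ht hσt).lt_of_ne hne
    obtain ⟨t₁, ⟨hσt₁, ht₁t⟩, hy₁⟩ := intermediate_value_Ioo hσt hy.continuousOn
      (show (y (sSup A) + y t) / 2 ∈ Ioo (y (sSup A)) (y t) from ⟨by linarith, by linarith⟩)
    obtain ⟨s, hs₁, hst, hzs⟩ := hrefl t₁ t (hσ0.trans hσt₁.le) ht₁t (by linarith)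
    have : s ≤ sSup A := le_csSup hbdd ⟨⟨by linarith, hst⟩, hzs⟩
    linarith
  · refine ⟨0, ⟨le_rfl, ht⟩, ?_, Or.inl rfl⟩
    rcases ht.eq_or_lt with rfl | ht'
    · rfl
    by_contra hne
    obtain ⟨s, hs0, hst, hzs⟩ := hrefl 0 t le_rfl ht' ((hmono self_mem_Ici ht ht).lt_of_ne hne)
    exact hzero ⟨s, ⟨hs0, hst⟩, hzs⟩

lemma Fin.sum_filter_one_le_ne_succ {M : Type*} [AddCommGroup M] {n : ℕ} (f : Fin (n + 1) → M)
    (j : Fin n) :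
    ∑ ℓ ∈ Finset.univ.filter (fun ℓ : Fin (n + 1) => 1 ≤ ℓ.1 ∧ ℓ ≠ j.succ), f ℓ
      = ∑ i : Fin n, f i.succ - f j.succ := by
  rw [Finset.sum_filter, Fin.sum_univ_succ]
  simp [Fin.succ_inj, Finset.sum_ite, Finset.filter_ne', Finset.sum_erase_eq_sub]

lemma Rmat_succ_zero_mem_Icc {δ₁ : ℝ} (δ₂ δ₃ δ₄ : ℝ) (hδ₁ : 0 ≤ δ₁) (k : Fin 5) :
    Rmat δ₁ δ₂ δ₃ δ₄ k.succ 0 ∈ Icc 1 (1 + δ₁) := by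
  fin_cases k <;> simp [Rmat, hδ₁]

structure IsSRBMPath (δ₁ δ₂ δ₃ δ₄ : ℝ) (z y b : Fin 6 → ℝ → ℝ) : Prop where
  continuous_z : ∀ k, Continuous (z k)
  continuous_y : ∀ k, Continuous (y k)
  eq : ∀ t, 0 ≤ t → ∀ k, z k t = z k 0 + b k t + (-1) * t + ∑ j, Rmat δ₁ δ₂ δ₃ δ₄ k j * y j t
  y_zero : ∀ k, y k 0 = 0
  monotoneOn : ∀ k, MonotoneOn (y k) (Ici 0)
  reflect : ∀ k t₁ t₂, 0 ≤ t₁ → t₁ < t₂ → y k t₁ < y k t₂ → ∃ s, t₁ ≤ s ∧ s ≤ t₂ ∧ z k s = 0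
  nonneg : ∀ k t, 0 ≤ t → 0 ≤ z k t

lemma IsSRBM.ae_isSRBMPath {δ₁ δ₂ δ₃ δ₄ : ℝ} {Ω : Type} [MeasurableSpace Ω] {P : Measure Ω}
    {B Z Y : Fin 6 → ℝ → Ω → ℝ} (h : IsSRBM δ₁ δ₂ δ₃ δ₄ P B Z Y) :
    ∀ᵐ ω ∂P, IsSRBMPath δ₁ δ₂ δ₃ δ₄ (fun k t => Z k t ω) (fun k t => Y k t ω)
      (fun k t => B k t ω) := by
  obtain ⟨-, -, -, -, hZ, hY, hae⟩ := h
  filter_upwards [hae] with ω ⟨heq, hzero, hmono, hrefl, hnonneg⟩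
  exact ⟨fun k => hZ k ω, fun k => hY k ω, heq, hzero, hmono, hrefl, hnonneg⟩

namespace IsSRBMPath

variable {δ₁ δ₂ δ₃ δ₄ : ℝ} {z y b : Fin 6 → ℝ → ℝ} (h : IsSRBMPath δ₁ δ₂ δ₃ δ₄ z y b)
include h

lemma y_nonneg (k : Fin 6) {u : ℝ} (hu : 0 ≤ u) : 0 ≤ y k u :=
  h.y_zero k ▸ h.monotoneOn k self_mem_Ici hu hu

lemma y_mono (k : Fin 6) {u v : ℝ} (hu : 0 ≤ u) (huv : u ≤ v) : y k u ≤ y k v :=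
  h.monotoneOn k hu (hu.trans huv) huv

lemma row (k : Fin 5) {u : ℝ} (hu : 0 ≤ u) :
    z k.succ u = z k.succ 0 + b k.succ u - u + Rmat δ₁ δ₂ δ₃ δ₄ k.succ 0 * y 0 u
      + (1 - δ₃) * ∑ i : Fin 5, y i.succ u + δ₃ * y k.succ u := by
  rw [h.eq u hu]
  fin_cases k <;> simp [Fin.sum_univ_succ, Rmat] <;> ring

lemma exists_eq_at_last_zero (k : Fin 6) {t : ℝ} (ht : 0 ≤ t) :
    ∃ σ ∈ Icc 0 t, y k σ = y k t ∧ (σ = 0 ∨ z k σ = 0) :=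
  _root_.exists_eq_at_last_zero (h.continuous_z k) (h.continuous_y k) (h.monotoneOn k)
    (h.reflect k) ht

lemma mul_sum_add_mul_le (hδ₁ : 0 ≤ δ₁) (hδ₃ : 0 ≤ δ₃) {t c : ℝ} (ht : 0 ≤ t)
    (hb : ∀ i, ∀ s ∈ Icc 0 t, |b i s| ≤ c) (k : Fin 5) :
    (1 - δ₃) * ∑ i : Fin 5, y i.succ t + δ₃ * y k.succ t ≤ t + 3 * c := by
  choose σ hσ hyσ hzσ using fun i : Fin 5 => h.exists_eq_at_last_zero i.succ ht
  obtain ⟨m, -, hm⟩ := Finset.exists_max_image Finset.univ σ Finset.univ_nonempty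
  let S (u : ℝ) : ℝ := ∑ i : Fin 5, y i.succ u
  have hSm : S (σ m) = S t := Finset.sum_congr rfl fun i _ =>
    le_antisymm (h.y_mono _ (hσ m).1 (hσ m).2)
      (hyσ i ▸ h.y_mono _ (hσ i).1 (hm i (Finset.mem_univ i)))
  have hR (i : Fin 5) := Rmat_succ_zero_mem_Icc δ₂ δ₃ δ₄ hδ₁ i
  have hb' (i : Fin 6) (s : ℝ) (hs : s ∈ Icc 0 t) := abs_le.1 (hb i s hs)
  have hfirst : (1 - δ₃) * S (σ k) + δ₃ * y k.succ t ≤ σ k + c := by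
    have hrow := h.row k (hσ k).1
    have hz : z k.succ (σ k) ≤ z k.succ 0 := by
      rcases hzσ k with h0 | h0 <;> rw [h0]
      exact h.nonneg _ 0 le_rfl
    have hy0 := mul_nonneg (zero_le_one.trans (hR k).1) (h.y_nonneg 0 (hσ k).1)
    rw [hyσ k] at hrow
    linarith [(hb' k.succ _ (hσ k)).1]
  have hsecond : (1 - δ₃) * (S t - S (σ k)) ≤ t - σ k + 2 * c := by
    have hkm := hm k (Finset.mem_univ k)
    have hrow_m := h.row m (hσ m).1
    have hrow_k := h.row m (hσ k).1
    have hz : z m.succ (σ m) ≤ z m.succ (σ k) := by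
      rcases hzσ m with h0 | h0
      · rw [le_antisymm (h0 ▸ hkm) (hσ k).1, h0]
      · rw [h0]; exact h.nonneg _ _ (hσ k).1
    have hy0 := mul_nonneg (zero_le_one.trans (hR m).1)
      (sub_nonneg.2 (h.y_mono 0 (hσ k).1 hkm))
    have hym := mul_nonneg hδ₃ (sub_nonneg.2 (h.y_mono m.succ (hσ k).1 hkm))
    rw [← hSm]
    dsimp only [S]
    linarith [(hb' m.succ _ (hσ m)).1, (hb' m.succ _ (hσ k)).2, (hσ m).2]
  linarith

lemma le_mul_y_add_z_zero_add (hδ₁ : δ₁ ∈ Icc 0 1) (hδ₃ : δ₃ ∈ Icc 0 1) {t c : ℝ} (ht : 0 ≤ t)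
    (hb : ∀ i, ∀ s ∈ Icc 0 t, |b i s| ≤ c) (k : Fin 5) :
    δ₃ * t / 5 + 4 * δ₃ ^ 2 / 25 * t - 5 * c ≤ δ₃ * y k.succ t + z k.succ 0 + 2 * y 0 t := by
  obtain ⟨hδ₁0, hδ₁1⟩ := hδ₁
  obtain ⟨hδ₃0, hδ₃1⟩ := hδ₃
  have hc : 0 ≤ c := (abs_nonneg _).trans (hb 0 0 ⟨le_rfl, ht⟩)
  have hsum : (5 - 4 * δ₃) * ∑ i : Fin 5, y i.succ t ≤ 5 * t + 15 * c := by
    have hA := h.mul_sum_add_mul_le hδ₁0 hδ₃0 ht hb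
    have hS5 := congrArg (δ₃ * ·) (Fin.sum_univ_five fun i => y i.succ t)
    linarith [hA 0, hA 1, hA 2, hA 3, hA 4]
  have hS_le : (1 - δ₃) * ∑ i : Fin 5, y i.succ t
      ≤ t - δ₃ * t / 5 - 4 * δ₃ ^ 2 * t / 25 + 4 * c := by
    refine le_of_mul_le_mul_left ?_ (by linarith : (0 : ℝ) < 5 - 4 * δ₃)
    calc (5 - 4 * δ₃) * ((1 - δ₃) * ∑ i : Fin 5, y i.succ t)
        = (1 - δ₃) * ((5 - 4 * δ₃) * ∑ i : Fin 5, y i.succ t) := by ring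
      _ ≤ (1 - δ₃) * (5 * t + 15 * c) := by gcongr
      _ ≤ (5 - 4 * δ₃) * (t - δ₃ * t / 5 - 4 * δ₃ ^ 2 * t / 25 + 4 * c) := by
        nlinarith [pow_nonneg hδ₃0 3, mul_nonneg (by linarith : (0 : ℝ) ≤ 5 - δ₃) hc]
  have hR := mul_le_mul_of_nonneg_right
    ((Rmat_succ_zero_mem_Icc δ₂ δ₃ δ₄ hδ₁0 k).2.trans (by linarith : 1 + δ₁ ≤ 2))
    (h.y_nonneg 0 ht)
  linarith [h.row k ht, h.nonneg k.succ t ht, (abs_le.1 (hb k.succ t ⟨ht, le_rfl⟩)).2]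

end IsSRBMPath

/-- Indices are shifted by one: `Y k` is the paper's `Y_{k+1}`. -/
theorem stmt_8 (δ₁ δ₂ δ₃ δ₄ : ℝ) (hδ : DeltaCond δ₁ δ₂ δ₃ δ₄)
    {Ω : Type} [MeasurableSpace Ω] (P : Measure Ω) [IsProbabilityMeasure P]
    (B Z Y : Fin 6 → ℝ → Ω → ℝ) (hSRBM : IsSRBM δ₁ δ₂ δ₃ δ₄ P B Z Y)
    (N : Fin 6 → ℝ → Ω → ℝ)
    (hN : N = fun k t ω => if k = 5 then Y 0 t ω else 0) :
    (∀ ε : ℝ, 0 < ε → ∃ C₁ > (0 : ℝ), ∃ ε' > (0 : ℝ),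
      ∀ t : ℝ, 0 ≤ t → ∀ k : Fin 6, 1 ≤ k.1 →
        P {ω | (1 + ε) * t + δ₁ * N k t ω ≤ Y k t ω +
            (1 - δ₃) * ∑ ℓ ∈ Finset.univ.filter (fun ℓ : Fin 6 => 1 ≤ ℓ.1 ∧ ℓ ≠ k), Y ℓ t ω} ≤
          ENNReal.ofReal (C₁ * Real.exp (-ε' * t))) ∧
    (∃ C₁ > (0 : ℝ), ∃ ε' > (0 : ℝ),
      ∀ t : ℝ, 0 ≤ t → ∀ k : Fin 6, 1 ≤ k.1 →
        P {ω | Y k t ω ≤ t / 5 - (1 / δ₃) * (Z k 0 ω + 2 * Y 0 t ω)} ≤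
          ENNReal.ofReal (C₁ * Real.exp (-ε' * t))) := by
  obtain ⟨hδ₁, -, hδ₃, -, -, hδ₁₃, hδ₃₁, -⟩ := hδ
  have hpath := hSRBM.ae_isSRBMPath
  have hsucc {k : Fin 6} (hk : 1 ≤ k.1) : ∃ j : Fin 5, j.succ = k :=
    Fin.exists_succ_eq.2 fun h => by simp [h] at hk
  constructor
  · intro ε hε
    refine ⟨4 * Fintype.card (Fin 6), by positivity, (ε / 4) ^ 2 / 2, by positivity,
      fun t ht k hk => ?_⟩
    obtain ⟨j, rfl⟩ := hsucc hk
    refine measure_le_of_ae_exists_lt_abs hSRBM.1 (by positivity) ht fun ht => ?_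
    filter_upwards [hpath] with ω hω hE
    by_contra! hsmall
    have hA := hω.mul_sum_add_mul_le hδ₁.le hδ₃.le ht.le hsmall j
    have hN : 0 ≤ N j.succ t ω := by
      rw [hN]
      dsimp only
      split_ifs
      exacts [hω.y_nonneg 0 ht.le, le_rfl]
    rw [Fin.sum_filter_one_le_ne_succ] at hE
    linarith [mul_pos hε ht, mul_nonneg hδ₁.le hN]
  · refine ⟨4 * Fintype.card (Fin 6), by positivity, (δ₃ ^ 2 / 40) ^ 2 / 2, by positivity,
      fun t ht k hk => ?_⟩
    obtain ⟨j, rfl⟩ := hsucc hk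
    refine measure_le_of_ae_exists_lt_abs hSRBM.1 (by positivity) ht fun ht => ?_
    filter_upwards [hpath] with ω hω hE
    by_contra! hsmall
    have hB := hω.le_mul_y_add_z_zero_add ⟨hδ₁.le, by linarith⟩ ⟨hδ₃.le, by linarith⟩ ht.le hsmall j
    have hE' := mul_le_mul_of_nonneg_left hE hδ₃.le
    rw [mul_sub, ← mul_assoc, mul_one_div_cancel hδ₃.ne', one_mul] at hE'
    linarith [mul_pos (pow_pos hδ₃ 2) ht]
end
end
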